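/- arXiv:2509.08430 — 2 statements merged into one kernel-verified Lean document; each statement's English description precedes it below -/
import Mathlib

section
/- Constant total activity in the equal-mass elastic system: let x ∈ ℤ^N with x_1 ≤ ⋯ ≤ x_N, equal masses m_i ≡ m > 0, and rates A_i(x) = 1{x_{i−1} < x_i} ∑_{j=i}^N a_j 1{x_j = x_i} and B_i(x) = 1{x_{i+1} > x_i} ∑_{j=1}^i b_j 1{x_j = x_i} (conventions x_0 = −∞, x_{N+1} = +∞). Then ∑_{i=1}^N (A_i(x) + B_i(x)) = ∑_{i=1}^N (a_i + b_i), independently of x. -/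
open Finset

lemma stmt17_mono (N : ℕ) (x : ℕ → ℤ)
    (hx : ∀ i ∈ Finset.Icc 1 (N - 1), x i ≤ x (i + 1)) :
    ∀ d i, 1 ≤ i → i + d ≤ N → x i ≤ x (i + d) := by
  intro d
  induction d with
  | zero => intro i _ _; simp
  | succ d ih =>
    intro i h1 h2
    have h3 : x i ≤ x (i + d) := ih i h1 (by omega)
    have h4 : x (i + d) ≤ x (i + d + 1) := hx (i + d) (by simp [Finset.mem_Icc]; omega)
    have : i + (d + 1) = i + d + 1 := by omega
    rw [this]; linarith

/-- Constant total activity in the equal-mass elastic system: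
`∑ᵢ (Aᵢ(x) + Bᵢ(x)) = ∑ᵢ (aᵢ + bᵢ)`, independently of the configuration `x`. -/
theorem stmt17 (N : ℕ) (hN : 1 ≤ N) (a b : ℕ → ℝ)
    (ha : ∀ i, 0 ≤ a i) (hb : ∀ i, 0 ≤ b i)
    (x : ℕ → ℤ) (hx : ∀ i ∈ Finset.Icc 1 (N - 1), x i ≤ x (i + 1))
    (A B : ℕ → ℝ)
    (hA : ∀ i, A i = (if i = 1 ∨ x (i - 1) < x i then (1 : ℝ) else 0)
        * ∑ j ∈ Finset.Icc i N, (if x j = x i then a j else 0))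
    (hB : ∀ i, B i = (if i = N ∨ x i < x (i + 1) then (1 : ℝ) else 0)
        * ∑ j ∈ Finset.Icc 1 i, (if x j = x i then b j else 0)) :
    ∑ i ∈ Finset.Icc 1 N, (A i + B i) = ∑ i ∈ Finset.Icc 1 N, (a i + b i) := by
  have hmono : ∀ i k, 1 ≤ i → i ≤ k → k ≤ N → x i ≤ x k := by
    intro i k h1 h2 h3
    have := stmt17_mono N x hx (k - i) i h1 (by omega)
    rwa [show i + (k - i) = k by omega] at this
  have hAsum : ∑ i ∈ Finset.Icc 1 N, A i = ∑ i ∈ Finset.Icc 1 N, a i := by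
    calc ∑ i ∈ Finset.Icc 1 N, A i
        = ∑ i ∈ Finset.Icc 1 N, ∑ j ∈ Finset.Icc i N,
            (if i = 1 ∨ x (i - 1) < x i then (1 : ℝ) else 0)
              * (if x j = x i then a j else 0) := by
          refine Finset.sum_congr rfl fun i _ => ?_
          rw [hA i, Finset.mul_sum]
      _ = ∑ j ∈ Finset.Icc 1 N, ∑ i ∈ Finset.Icc 1 j,
            (if i = 1 ∨ x (i - 1) < x i then (1 : ℝ) else 0)
              * (if x j = x i then a j else 0) := by
          apply Finset.sum_comm'
          intro i j
          simp only [Finset.mem_Icc]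
          omega
      _ = ∑ j ∈ Finset.Icc 1 N, a j := by
          refine Finset.sum_congr rfl fun j hj => ?_
          simp only [Finset.mem_Icc] at hj
          set S := (Finset.Icc 1 j).filter (fun i => x i = x j) with hS
          have hjS : j ∈ S := by simp [hS, Finset.mem_Icc]; omega
          have hne : S.Nonempty := ⟨j, hjS⟩
          set m := S.min' hne with hm
          have hmS : m ∈ S := S.min'_mem hne
          simp only [hS, Finset.mem_filter, Finset.mem_Icc] at hmS
          obtain ⟨⟨hm1, hmj⟩, hxm⟩ := hmS
          have hother : ∀ i ∈ Finset.Icc 1 j, i ≠ m →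
              ((if i = 1 ∨ x (i - 1) < x i then (1 : ℝ) else 0)
                * (if x j = x i then a j else 0)) = 0 := by
            intro i hi hine
            simp only [Finset.mem_Icc] at hi
            by_cases hxi : x i = x j
            · have hiS : i ∈ S := by simp [hS, Finset.mem_Icc]; exact ⟨⟨hi.1, hi.2⟩, hxi⟩
              have hmi : m ≤ i := S.min'_le i hiS
              have hmlt : m < i := lt_of_le_of_ne hmi (fun h => hine h.symm)
              have hi2 : 2 ≤ i := by omega
              have hle : x (i - 1) ≤ x i := hmono (i - 1) i (by omega) (by omega) (by omega)
              have hge : x m ≤ x (i - 1) := hmono m (i - 1) hm1 (by omega) (by omega)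
              have : ¬ (i = 1 ∨ x (i - 1) < x i) := by
                push_neg
                refine ⟨by omega, ?_⟩
                rw [hxi, ← hxm] at *; linarith
              simp [this]
            · have hne' : ¬ x j = x i := fun h => hxi h.symm
              simp [hne']
          rw [Finset.sum_eq_single_of_mem m (by simp [Finset.mem_Icc]; omega) hother]
          have hcond : m = 1 ∨ x (m - 1) < x m := by
            by_cases hm1' : m = 1
            · left; exact hm1'
            · right
              have hle : x (m - 1) ≤ x m := hmono (m - 1) m (by omega) (by omega) (by omega)
              rcases lt_or_eq_of_le hle with h | h
              · exact h
              · exfalso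
                have : (m - 1) ∈ S := by
                  simp [hS, Finset.mem_Icc]
                  exact ⟨⟨by omega, by omega⟩, by rw [h, hxm]⟩
                have := S.min'_le (m - 1) this
                omega
          rw [if_pos hcond, if_pos hxm.symm, one_mul]
  have hBsum : ∑ i ∈ Finset.Icc 1 N, B i = ∑ i ∈ Finset.Icc 1 N, b i := by
    calc ∑ i ∈ Finset.Icc 1 N, B i
        = ∑ i ∈ Finset.Icc 1 N, ∑ j ∈ Finset.Icc 1 i,
            (if i = N ∨ x i < x (i + 1) then (1 : ℝ) else 0)
              * (if x j = x i then b j else 0) := by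
          refine Finset.sum_congr rfl fun i _ => ?_
          rw [hB i, Finset.mul_sum]
      _ = ∑ j ∈ Finset.Icc 1 N, ∑ i ∈ Finset.Icc j N,
            (if i = N ∨ x i < x (i + 1) then (1 : ℝ) else 0)
              * (if x j = x i then b j else 0) := by
          apply Finset.sum_comm'
          intro i j
          simp only [Finset.mem_Icc]
          omega
      _ = ∑ j ∈ Finset.Icc 1 N, b j := by
          refine Finset.sum_congr rfl fun j hj => ?_
          simp only [Finset.mem_Icc] at hj
          set S := (Finset.Icc j N).filter (fun i => x i = x j) with hS
          have hjS : j ∈ S := by simp [hS, Finset.mem_Icc]; omega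
          have hne : S.Nonempty := ⟨j, hjS⟩
          set m := S.max' hne with hm
          have hmS : m ∈ S := S.max'_mem hne
          simp only [hS, Finset.mem_filter, Finset.mem_Icc] at hmS
          obtain ⟨⟨hmj, hmN⟩, hxm⟩ := hmS
          have hother : ∀ i ∈ Finset.Icc j N, i ≠ m →
              ((if i = N ∨ x i < x (i + 1) then (1 : ℝ) else 0)
                * (if x j = x i then b j else 0)) = 0 := by
            intro i hi hine
            simp only [Finset.mem_Icc] at hi
            by_cases hxi : x i = x j
            · have hiS : i ∈ S := by simp [hS, Finset.mem_Icc]; exact ⟨⟨hi.1, hi.2⟩, hxi⟩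
              have hmi : i ≤ m := S.le_max' i hiS
              have hmlt : i < m := lt_of_le_of_ne hmi hine
              have hle : x i ≤ x (i + 1) := hmono i (i + 1) (by omega) (by omega) (by omega)
              have hge : x (i + 1) ≤ x m := hmono (i + 1) m (by omega) (by omega) (by omega)
              have : ¬ (i = N ∨ x i < x (i + 1)) := by
                push_neg
                refine ⟨by omega, ?_⟩
                rw [hxi, ← hxm] at *; linarith
              simp [this]
            · have hne' : ¬ x j = x i := fun h => hxi h.symm
              simp [hne']
          rw [Finset.sum_eq_single_of_mem m (by simp [Finset.mem_Icc]; omega) hother]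
          have hcond : m = N ∨ x m < x (m + 1) := by
            by_cases hmN' : m = N
            · left; exact hmN'
            · right
              have hle : x m ≤ x (m + 1) := hmono m (m + 1) (by omega) (by omega) (by omega)
              rcases lt_or_eq_of_le hle with h | h
              · exact h
              · exfalso
                have : (m + 1) ∈ S := by
                  simp [hS, Finset.mem_Icc]
                  exact ⟨⟨by omega, by omega⟩, by rw [← h, hxm]⟩
                have := S.le_max' (m + 1) this
                omega
          rw [if_pos hcond, if_pos hxm.symm, one_mul]
  rw [Finset.sum_add_distrib, hAsum, hBsum, ← Finset.sum_add_distrib]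
end

section
/- Positive lower bound on total jump rate: for any configuration x ∈ ℤ^N with x_1 ≤ ⋯ ≤ x_N, masses m_i > 0 and rates a_i, b_i ≥ 0 with ∑_{i=1}^N (a_i + b_i) > 0, the total rate R_x = ∑_{i=1}^N (A_i(x) + B_i(x)) satisfies R_x ≥ c for a constant c > 0 depending only on the m_i, a_i, b_i (e.g. c = min_{i,j} (m_j/m_i) · max_i (a_i + b_i) works); in particular R_x > 0 for every x. -/
/-- Positive lower bound on the total jump rate: if `∑ᵢ (aᵢ + bᵢ) > 0`, there is a
constant `c > 0` (depending only on the parameters) such that `R_x ≥ c` for every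
weakly increasing configuration `x`; in particular `R_x > 0` for every such `x`. -/
theorem stmt18 (N : ℕ) (hN : 1 ≤ N) (m a b : ℕ → ℝ)
    (hm : ∀ i ∈ Finset.Icc 1 N, 0 < m i)
    (ha : ∀ i, 0 ≤ a i) (hb : ∀ i, 0 ≤ b i)
    (hpos : 0 < ∑ i ∈ Finset.Icc 1 N, (a i + b i))
    (R : (ℕ → ℤ) → ℝ)
    (hR : ∀ x : ℕ → ℤ, R x =
      ∑ i ∈ Finset.Icc 1 N,
        ((if i = 1 ∨ x (i - 1) < x i then (1 : ℝ) else 0)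
            * ∑ j ∈ Finset.Icc i N, (if x j = x i then m j * a j / m i else 0)
          + (if i = N ∨ x i < x (i + 1) then (1 : ℝ) else 0)
            * ∑ j ∈ Finset.Icc 1 i, (if x j = x i then m j * b j / m i else 0))) :
    (∃ c > (0 : ℝ), ∀ x : ℕ → ℤ,
        (∀ i ∈ Finset.Icc 1 (N - 1), x i ≤ x (i + 1)) → c ≤ R x)
    ∧ ∀ x : ℕ → ℤ, (∀ i ∈ Finset.Icc 1 (N - 1), x i ≤ x (i + 1)) → 0 < R x := by
  -- pick k with a k + b k > 0
  obtain ⟨k, hk, hk0⟩ : ∃ k ∈ Finset.Icc 1 N, 0 < a k + b k := by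
    by_contra h
    push_neg at h
    have : ∑ i ∈ Finset.Icc 1 N, (a i + b i) ≤ 0 := Finset.sum_nonpos h
    linarith
  have hkN := Finset.mem_Icc.mp hk
  have hne : (Finset.Icc 1 N).Nonempty := ⟨1, by simp [hN]⟩
  set M := (Finset.Icc 1 N).sup' hne m with hM
  have hMle : ∀ i ∈ Finset.Icc 1 N, m i ≤ M := fun i hi => Finset.le_sup' m hi
  have hMpos : 0 < M := lt_of_lt_of_le (hm k hk) (hMle k hk)
  have hmk := hm k hk
  -- nonnegativity of each outer summand
  have hterm : ∀ (x : ℕ → ℤ), ∀ i ∈ Finset.Icc 1 N,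
      0 ≤ (if i = 1 ∨ x (i - 1) < x i then (1 : ℝ) else 0)
            * ∑ j ∈ Finset.Icc i N, (if x j = x i then m j * a j / m i else 0)
          + (if i = N ∨ x i < x (i + 1) then (1 : ℝ) else 0)
            * ∑ j ∈ Finset.Icc 1 i, (if x j = x i then m j * b j / m i else 0) := by
    intro x i hi
    have hi' := Finset.mem_Icc.mp hi
    have hmi := hm i hi
    have h1 : 0 ≤ ∑ j ∈ Finset.Icc i N, (if x j = x i then m j * a j / m i else 0) := by
      refine Finset.sum_nonneg fun j hj => ?_
      have hj' := Finset.mem_Icc.mp hj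
      have hmj := hm j (Finset.mem_Icc.mpr ⟨le_trans hi'.1 hj'.1, hj'.2⟩)
      have := ha j
      split_ifs <;> positivity
    have h2 : 0 ≤ ∑ j ∈ Finset.Icc 1 i, (if x j = x i then m j * b j / m i else 0) := by
      refine Finset.sum_nonneg fun j hj => ?_
      have hj' := Finset.mem_Icc.mp hj
      have hmj := hm j (Finset.mem_Icc.mpr ⟨hj'.1, le_trans hj'.2 hi'.2⟩)
      have := hb j
      split_ifs <;> positivity
    have g1 : 0 ≤ (if i = 1 ∨ x (i - 1) < x i then (1 : ℝ) else 0) := by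
      split_ifs <;> norm_num
    have g2 : 0 ≤ (if i = N ∨ x i < x (i + 1) then (1 : ℝ) else 0) := by
      split_ifs <;> norm_num
    exact add_nonneg (mul_nonneg g1 h1) (mul_nonneg g2 h2)
  have key : ∃ c > (0 : ℝ), ∀ x : ℕ → ℤ,
      (∀ i ∈ Finset.Icc 1 (N - 1), x i ≤ x (i + 1)) → c ≤ R x := by
    rcases (ha k).lt_or_eq with hak | hak
    · -- case a k > 0 : use the leftmost index of the block of k
      refine ⟨m k * a k / M, by positivity, fun x hx => ?_⟩
      set S := (Finset.Icc 1 N).filter (fun j => x j = x k) with hS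
      have hkS : k ∈ S := by simp [hS, hk]
      have hSne : S.Nonempty := ⟨k, hkS⟩
      set i := S.min' hSne with hi
      have hiS : i ∈ S := S.min'_mem hSne
      have hiIcc : i ∈ Finset.Icc 1 N := (Finset.mem_filter.mp hiS).1
      have hxi : x i = x k := (Finset.mem_filter.mp hiS).2
      have hik : i ≤ k := S.min'_le k hkS
      have hi' := Finset.mem_Icc.mp hiIcc
      have hmi := hm i hiIcc
      have hgate : i = 1 ∨ x (i - 1) < x i := by
        by_cases h1 : i = 1
        · exact Or.inl h1
        · right
          have h2 : 2 ≤ i := by omega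
          have hmem : i - 1 ∈ Finset.Icc 1 (N - 1) := by
            rw [Finset.mem_Icc]; omega
          have hle : x (i - 1) ≤ x i := by
            have := hx (i - 1) hmem
            rwa [Nat.sub_add_cancel (by omega : 1 ≤ i)] at this
          rcases lt_or_eq_of_le hle with h | h
          · exact h
          · exfalso
            have : i - 1 ∈ S := by
              rw [hS, Finset.mem_filter, Finset.mem_Icc]
              exact ⟨⟨by omega, by omega⟩, by rw [h, hxi]⟩
            have := S.min'_le _ this
            omega
      have hinner : m k * a k / m i ≤
          ∑ j ∈ Finset.Icc i N, (if x j = x i then m j * a j / m i else 0) := by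
        have hkmem : k ∈ Finset.Icc i N := Finset.mem_Icc.mpr ⟨hik, hkN.2⟩
        have := Finset.single_le_sum
          (f := fun j => if x j = x i then m j * a j / m i else 0)
          (fun j hj => by
            have hj' := Finset.mem_Icc.mp hj
            have hmj := hm j (Finset.mem_Icc.mpr ⟨le_trans hi'.1 hj'.1, hj'.2⟩)
            have := ha j
            split_ifs <;> positivity) hkmem
        rwa [if_pos hxi.symm] at this
      have hterm_i : m k * a k / m i ≤
          (if i = 1 ∨ x (i - 1) < x i then (1 : ℝ) else 0)
            * ∑ j ∈ Finset.Icc i N, (if x j = x i then m j * a j / m i else 0)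
          + (if i = N ∨ x i < x (i + 1) then (1 : ℝ) else 0)
            * ∑ j ∈ Finset.Icc 1 i, (if x j = x i then m j * b j / m i else 0) := by
        rw [if_pos hgate, one_mul]
        have h2 : 0 ≤ (if i = N ∨ x i < x (i + 1) then (1 : ℝ) else 0)
            * ∑ j ∈ Finset.Icc 1 i, (if x j = x i then m j * b j / m i else 0) := by
          have g2 : 0 ≤ (if i = N ∨ x i < x (i + 1) then (1 : ℝ) else 0) := by
            split_ifs <;> norm_num
          refine mul_nonneg g2 (Finset.sum_nonneg fun j hj => ?_)
          have hj' := Finset.mem_Icc.mp hj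
          have hmj := hm j (Finset.mem_Icc.mpr ⟨hj'.1, le_trans hj'.2 hi'.2⟩)
          have := hb j
          split_ifs <;> positivity
        linarith
      have hsum : (if i = 1 ∨ x (i - 1) < x i then (1 : ℝ) else 0)
            * ∑ j ∈ Finset.Icc i N, (if x j = x i then m j * a j / m i else 0)
          + (if i = N ∨ x i < x (i + 1) then (1 : ℝ) else 0)
            * ∑ j ∈ Finset.Icc 1 i, (if x j = x i then m j * b j / m i else 0) ≤ R x := by
        rw [hR]
        exact Finset.single_le_sum (hterm x) hiIcc
      have hc : m k * a k / M ≤ m k * a k / m i :=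
        div_le_div_of_nonneg_left (by positivity) hmi (hMle i hiIcc)
      linarith
    · -- case a k = 0, so b k > 0 : use the rightmost index of the block of k
      have hbk : 0 < b k := by rw [← hak] at hk0; linarith
      refine ⟨m k * b k / M, by positivity, fun x hx => ?_⟩
      set S := (Finset.Icc 1 N).filter (fun j => x j = x k) with hS
      have hkS : k ∈ S := by simp [hS, hk]
      have hSne : S.Nonempty := ⟨k, hkS⟩
      set i := S.max' hSne with hi
      have hiS : i ∈ S := S.max'_mem hSne
      have hiIcc : i ∈ Finset.Icc 1 N := (Finset.mem_filter.mp hiS).1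
      have hxi : x i = x k := (Finset.mem_filter.mp hiS).2
      have hik : k ≤ i := S.le_max' k hkS
      have hi' := Finset.mem_Icc.mp hiIcc
      have hmi := hm i hiIcc
      have hgate : i = N ∨ x i < x (i + 1) := by
        by_cases h1 : i = N
        · exact Or.inl h1
        · right
          have hmem : i ∈ Finset.Icc 1 (N - 1) := by
            rw [Finset.mem_Icc]; omega
          have hle : x i ≤ x (i + 1) := hx i hmem
          rcases lt_or_eq_of_le hle with h | h
          · exact h
          · exfalso
            have : i + 1 ∈ S := by
              rw [hS, Finset.mem_filter, Finset.mem_Icc]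
              exact ⟨⟨by omega, by omega⟩, by rw [← h, hxi]⟩
            have := S.le_max' _ this
            omega
      have hinner : m k * b k / m i ≤
          ∑ j ∈ Finset.Icc 1 i, (if x j = x i then m j * b j / m i else 0) := by
        have hkmem : k ∈ Finset.Icc 1 i := Finset.mem_Icc.mpr ⟨hkN.1, hik⟩
        have := Finset.single_le_sum
          (f := fun j => if x j = x i then m j * b j / m i else 0)
          (fun j hj => by
            have hj' := Finset.mem_Icc.mp hj
            have hmj := hm j (Finset.mem_Icc.mpr ⟨hj'.1, le_trans hj'.2 hi'.2⟩)
            have := hb j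
            split_ifs <;> positivity) hkmem
        rwa [if_pos hxi.symm] at this
      have hterm_i : m k * b k / m i ≤
          (if i = 1 ∨ x (i - 1) < x i then (1 : ℝ) else 0)
            * ∑ j ∈ Finset.Icc i N, (if x j = x i then m j * a j / m i else 0)
          + (if i = N ∨ x i < x (i + 1) then (1 : ℝ) else 0)
            * ∑ j ∈ Finset.Icc 1 i, (if x j = x i then m j * b j / m i else 0) := by
        rw [if_pos hgate, one_mul]
        have h2 : 0 ≤ (if i = 1 ∨ x (i - 1) < x i then (1 : ℝ) else 0)
            * ∑ j ∈ Finset.Icc i N, (if x j = x i then m j * a j / m i else 0) := by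
          have g2 : 0 ≤ (if i = 1 ∨ x (i - 1) < x i then (1 : ℝ) else 0) := by
            split_ifs <;> norm_num
          refine mul_nonneg g2 (Finset.sum_nonneg fun j hj => ?_)
          have hj' := Finset.mem_Icc.mp hj
          have hmj := hm j (Finset.mem_Icc.mpr ⟨le_trans hi'.1 hj'.1, hj'.2⟩)
          have := ha j
          split_ifs <;> positivity
        linarith
      have hsum : (if i = 1 ∨ x (i - 1) < x i then (1 : ℝ) else 0)
            * ∑ j ∈ Finset.Icc i N, (if x j = x i then m j * a j / m i else 0)
          + (if i = N ∨ x i < x (i + 1) then (1 : ℝ) else 0)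
            * ∑ j ∈ Finset.Icc 1 i, (if x j = x i then m j * b j / m i else 0) ≤ R x := by
        rw [hR]
        exact Finset.single_le_sum (hterm x) hiIcc
      have hc : m k * b k / M ≤ m k * b k / m i :=
        div_le_div_of_nonneg_left (by positivity) hmi (hMle i hiIcc)
      linarith
  refine ⟨key, fun x hx => ?_⟩
  obtain ⟨c, hc, hcle⟩ := key
  exact lt_of_lt_of_le hc (hcle x hx)
end
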